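/- Let n and k be coprime odd positive integers, and m an odd positive integer with mk > n. Set i = (mk+n)/2, j = (mk-n)/2, a = uⁱvʲ - uʲvⁱ and b = u^{3i}v^{3j} - u^{3j}v^{3i} in the (-1)-quantum plane k_{-1}[u,v]. Then ab - ba = ±2(u^{i+3j}v^{3i+j} - u^{3i+j}v^{i+3j}) ≠ 0; in particular a and b do not commute. -/
import Mathlib


/-- The defining relation of the `(-1)`-quantum plane: `v * u = -(u * v)`. -/
inductive NegQRel (K : Type*) [Field K] :
    FreeAlgebra K (Fin 2) → FreeAlgebra K (Fin 2) → Prop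
  | rel : NegQRel K (FreeAlgebra.ι K 1 * FreeAlgebra.ι K 0)
      (-(FreeAlgebra.ι K 0 * FreeAlgebra.ι K 1))

/-- The `(-1)`-quantum plane `k_{-1}[u,v] = k⟨u,v⟩/(vu + uv)`. -/
abbrev NegQPlane (K : Type*) [Field K] := RingQuot (NegQRel K)

/-- The generator `u` of the `(-1)`-quantum plane. -/
noncomputable def NegQPlane.u (K : Type*) [Field K] : NegQPlane K :=
  RingQuot.mkAlgHom K (NegQRel K) (FreeAlgebra.ι K 0)

/-- The generator `v` of the `(-1)`-quantum plane. -/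
noncomputable def NegQPlane.v (K : Type*) [Field K] : NegQPlane K :=
  RingQuot.mkAlgHom K (NegQRel K) (FreeAlgebra.ι K 1)

set_option linter.unusedSectionVars false

noncomputable section NegQAux
open Polynomial Matrix

namespace NegQAux

variable (K : Type*) [Field K] [CharZero K]

abbrev R := Polynomial (Polynomial K)
abbrev M2 := Matrix (Fin 2) (Fin 2) (R K)

def A : M2 K := !![1, 0; 0, -1]
def B : M2 K := !![0, 1; 1, 0]
def x : R K := Polynomial.C Polynomial.X
def y : R K := Polynomial.X

lemma AB_eq : A K * B K = !![0, 1; -1, 0] := by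
  simp [A, B, Matrix.mul_fin_two]

lemma BA_eq : B K * A K = -(A K * B K) := by
  simp [A, B, Matrix.mul_fin_two]

lemma A_sq : A K ^ 2 = 1 := by
  norm_num [A, pow_two, Matrix.mul_fin_two]
  exact Matrix.one_fin_two.symm

lemma B_sq : B K ^ 2 = 1 := by
  norm_num [B, pow_two, Matrix.mul_fin_two]
  exact Matrix.one_fin_two.symm

lemma A_odd {p : ℕ} (hp : Odd p) : A K ^ p = A K := by
  obtain ⟨t, ht⟩ := hp
  rw [ht, pow_succ, pow_mul, A_sq, one_pow, one_mul]

lemma B_odd {p : ℕ} (hp : Odd p) : B K ^ p = B K := by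
  obtain ⟨t, ht⟩ := hp
  rw [ht, pow_succ, pow_mul, B_sq, one_pow, one_mul]

def F : FreeAlgebra K (Fin 2) →ₐ[K] M2 K :=
  FreeAlgebra.lift K ![x K • A K, y K • B K]

lemma F_rel : ∀ ⦃a b : FreeAlgebra K (Fin 2)⦄, NegQRel K a b → F K a = F K b := by
  rintro _ _ ⟨⟩
  simp only [_root_.map_mul, map_neg, F, FreeAlgebra.lift_ι_apply, Matrix.cons_val_zero,
    Matrix.cons_val_one, Matrix.head_cons]
  rw [smul_mul_smul_comm, smul_mul_smul_comm, BA_eq, mul_comm]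
  simp

def Φ : NegQPlane K →ₐ[K] M2 K := RingQuot.liftAlgHom K ⟨F K, F_rel K⟩

lemma Φ_u : Φ K (NegQPlane.u K) = x K • A K := by
  rw [NegQPlane.u, Φ, RingQuot.liftAlgHom_mkAlgHom_apply]
  simp [F, FreeAlgebra.lift_ι_apply]

lemma Φ_v : Φ K (NegQPlane.v K) = y K • B K := by
  rw [NegQPlane.v, Φ, RingQuot.liftAlgHom_mkAlgHom_apply]
  simp [F, FreeAlgebra.lift_ι_apply]

lemma Φ_uv {p q : ℕ} (hp : Odd p) (hq : Odd q) :
    Φ K (NegQPlane.u K ^ p * NegQPlane.v K ^ q) = (x K ^ p * y K ^ q) • (A K * B K) := by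
  rw [_root_.map_mul, map_pow, map_pow, Φ_u, Φ_v, _root_.smul_pow, _root_.smul_pow, A_odd K hp, B_odd K hq,
    smul_mul_smul_comm]

lemma P_ne {p1 q1 p2 q2 : ℕ} (h : q1 ≠ q2) :
    x K ^ p1 * y K ^ q1 - x K ^ p2 * y K ^ q2 ≠ 0 := by
  intro h0
  have h1 := congrArg (fun f => Polynomial.coeff f q1) h0
  simp only [x, y, ← Polynomial.C_pow, Polynomial.coeff_sub, Polynomial.coeff_C_mul,
    Polynomial.coeff_X_pow, if_pos rfl, if_neg h, mul_one, mul_zero, sub_zero,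
    Polynomial.coeff_zero, if_true] at h1
  exact pow_ne_zero _ Polynomial.X_ne_zero h1

lemma two_smul_ne {p1 q1 p2 q2 : ℕ} (hp1 : Odd p1) (hq1 : Odd q1) (hp2 : Odd p2)
    (hq2 : Odd q2) (hq : q1 ≠ q2) :
    (2 : ℤ) • (NegQPlane.u K ^ p1 * NegQPlane.v K ^ q1 -
      NegQPlane.u K ^ p2 * NegQPlane.v K ^ q2) ≠ 0 := by
  intro h0
  have h1 := congrArg (Φ K) h0
  rw [map_zsmul, map_sub, Φ_uv K hp1 hq1, Φ_uv K hp2 hq2, map_zero] at h1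
  have h2 := congrFun (congrFun h1 0) 1
  simp only [Matrix.smul_apply, Matrix.sub_apply, Matrix.zero_apply, AB_eq] at h2
  have e : (!![0, 1; -1, 0] : M2 K) 0 1 = 1 := by norm_num
  rw [e, smul_eq_mul, smul_eq_mul, mul_one, mul_one, zsmul_eq_mul] at h2
  rcases mul_eq_zero.mp h2 with h | h
  · norm_num at h
  · exact P_ne K hq h

end NegQAux

namespace NegQGeneric

variable {R : Type*} [Ring R] (U V : R) (huv : V * U = -(U * V))

include huv

lemma v_upow (p : ℕ) : V * U ^ p = (-1 : ℤ) ^ p • (U ^ p * V) := by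
  induction p with
  | zero => simp
  | succ p ih =>
    calc V * U ^ (p + 1)
        = (V * U ^ p) * U := by rw [pow_succ, mul_assoc]
      _ = (-1 : ℤ) ^ p • (U ^ p * (V * U)) := by rw [ih, smul_mul_assoc, mul_assoc]
      _ = (-1 : ℤ) ^ p • (U ^ p * -(U * V)) := by rw [huv]
      _ = -((-1 : ℤ) ^ p • (U ^ (p + 1) * V)) := by rw [mul_neg, smul_neg, pow_succ, mul_assoc]
      _ = (-1 : ℤ) ^ (p + 1) • (U ^ (p + 1) * V) := by rw [pow_succ (-1 : ℤ), mul_neg_one, neg_smul]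

lemma vpow_upow (p q : ℕ) :
    V ^ q * U ^ p = (-1 : ℤ) ^ (p * q) • (U ^ p * V ^ q) := by
  induction q with
  | zero => simp
  | succ q ih =>
    rw [pow_succ, mul_assoc, v_upow U V huv, mul_smul_comm, ← mul_assoc, ih, smul_mul_assoc,
      smul_smul, ← pow_add]
    rw [show p + p * q = p * (q + 1) from by ring, mul_assoc]

lemma key (p q r s t w : ℕ) (ht : p + r = t) (hw : q + s = w) :
    (U ^ p * V ^ q) * (U ^ r * V ^ s) = (-1 : ℤ) ^ (r * q) • (U ^ t * V ^ w) := by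
  subst ht hw
  rw [mul_assoc, ← mul_assoc (V ^ q), vpow_upow U V huv, smul_mul_assoc, mul_smul_comm,
    pow_add, pow_add]
  simp [mul_assoc]

lemma keyE {p q r s t w : ℕ} (ht : p + r = t) (hw : q + s = w) (he : Even (r * q)) :
    (U ^ p * V ^ q) * (U ^ r * V ^ s) = U ^ t * V ^ w := by
  rw [key U V huv p q r s t w ht hw, he.neg_one_pow, one_smul]

lemma keyO {p q r s t w : ℕ} (ht : p + r = t) (hw : q + s = w) (ho : Odd (r * q)) :
    (U ^ p * V ^ q) * (U ^ r * V ^ s) = -(U ^ t * V ^ w) := by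
  rw [key U V huv p q r s t w ht hw, ho.neg_one_pow, neg_one_zsmul]

/-- Case `i` odd, `j` even. -/
lemma case1 (i j : ℕ) (hio : Odd i) (hje : Even j) :
    (U ^ i * V ^ j - U ^ j * V ^ i) * (U ^ (3 * i) * V ^ (3 * j) - U ^ (3 * j) * V ^ (3 * i)) -
      (U ^ (3 * i) * V ^ (3 * j) - U ^ (3 * j) * V ^ (3 * i)) * (U ^ i * V ^ j - U ^ j * V ^ i)
      = -((2 : ℤ) • (U ^ (i + 3 * j) * V ^ (3 * i + j) - U ^ (3 * i + j) * V ^ (i + 3 * j))) := by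
  have h3i : Odd (3 * i) := (by decide : Odd 3).mul hio
  have h1 := keyE U V huv (p := i) (q := j) (r := 3 * i) (s := 3 * j)
    (t := 4 * i) (w := 4 * j) (by omega) (by omega) (hje.mul_left _)
  have h2 := keyE U V huv (p := i) (q := j) (r := 3 * j) (s := 3 * i)
    (t := i + 3 * j) (w := 3 * i + j) (by omega) (by omega) (hje.mul_left _)
  have h3 := keyO U V huv (p := j) (q := i) (r := 3 * i) (s := 3 * j)
    (t := 3 * i + j) (w := i + 3 * j) (by omega) (by omega) (h3i.mul hio)
  have h4 := keyE U V huv (p := j) (q := i) (r := 3 * j) (s := 3 * i)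
    (t := 4 * j) (w := 4 * i) (by omega) (by omega) ((hje.mul_left 3).mul_right _)
  have h5 := keyE U V huv (p := 3 * i) (q := 3 * j) (r := i) (s := j)
    (t := 4 * i) (w := 4 * j) (by omega) (by omega) ((hje.mul_left 3).mul_left _)
  have h6 := keyE U V huv (p := 3 * i) (q := 3 * j) (r := j) (s := i)
    (t := 3 * i + j) (w := i + 3 * j) (by omega) (by omega) ((hje.mul_left 3).mul_left _)
  have h7 := keyO U V huv (p := 3 * j) (q := 3 * i) (r := i) (s := j)
    (t := i + 3 * j) (w := 3 * i + j) (by omega) (by omega) (hio.mul h3i)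
  have h8 := keyE U V huv (p := 3 * j) (q := 3 * i) (r := j) (s := i)
    (t := 4 * j) (w := 4 * i) (by omega) (by omega) (hje.mul_right _)
  rw [sub_mul, sub_mul, mul_sub, mul_sub, mul_sub, mul_sub, h1, h2, h3, h4, h5, h6, h7, h8]
  abel
end NegQGeneric

namespace NegQGeneric2
open NegQGeneric
variable {R : Type*} [Ring R] (U V : R) (huv : V * U = -(U * V))
include huv

/-- Case `i` even, `j` odd. -/
lemma case2 (i j : ℕ) (hie : Even i) (hjo : Odd j) :
    (U ^ i * V ^ j - U ^ j * V ^ i) * (U ^ (3 * i) * V ^ (3 * j) - U ^ (3 * j) * V ^ (3 * i)) -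
      (U ^ (3 * i) * V ^ (3 * j) - U ^ (3 * j) * V ^ (3 * i)) * (U ^ i * V ^ j - U ^ j * V ^ i)
      = (2 : ℤ) • (U ^ (i + 3 * j) * V ^ (3 * i + j) - U ^ (3 * i + j) * V ^ (i + 3 * j)) := by
  have h3j : Odd (3 * j) := (by decide : Odd 3).mul hjo
  have h1 := keyE U V huv (p := i) (q := j) (r := 3 * i) (s := 3 * j)
    (t := 4 * i) (w := 4 * j) (by omega) (by omega) ((hie.mul_left 3).mul_right _)
  have h2 := keyO U V huv (p := i) (q := j) (r := 3 * j) (s := 3 * i)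
    (t := i + 3 * j) (w := 3 * i + j) (by omega) (by omega) (h3j.mul hjo)
  have h3 := keyE U V huv (p := j) (q := i) (r := 3 * i) (s := 3 * j)
    (t := 3 * i + j) (w := i + 3 * j) (by omega) (by omega) (hie.mul_left _)
  have h4 := keyE U V huv (p := j) (q := i) (r := 3 * j) (s := 3 * i)
    (t := 4 * j) (w := 4 * i) (by omega) (by omega) (hie.mul_left _)
  have h5 := keyE U V huv (p := 3 * i) (q := 3 * j) (r := i) (s := j)
    (t := 4 * i) (w := 4 * j) (by omega) (by omega) ((hie.mul_right _))
  have h6 := keyO U V huv (p := 3 * i) (q := 3 * j) (r := j) (s := i)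
    (t := 3 * i + j) (w := i + 3 * j) (by omega) (by omega) (hjo.mul h3j)
  have h7 := keyE U V huv (p := 3 * j) (q := 3 * i) (r := i) (s := j)
    (t := i + 3 * j) (w := 3 * i + j) (by omega) (by omega) (hie.mul_right _)
  have h8 := keyE U V huv (p := 3 * j) (q := 3 * i) (r := j) (s := i)
    (t := 4 * j) (w := 4 * i) (by omega) (by omega) ((hie.mul_left 3).mul_left _)
  rw [sub_mul, sub_mul, mul_sub, mul_sub, mul_sub, mul_sub, h1, h2, h3, h4, h5, h6, h7, h8]
  abel
end NegQGeneric2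


/-- Let `n, k` be odd coprime positive integers, `m` odd with `mk > n`,
`i = (mk+n)/2`, `j = (mk-n)/2`, and in `k_{-1}[u,v]` set `a = uⁱvʲ - uʲvⁱ`,
`b = u^{3i}v^{3j} - u^{3j}v^{3i}`. Then
`ab - ba = ±2(u^{i+3j}v^{3i+j} - u^{3i+j}v^{i+3j}) ≠ 0`; in particular `ab ≠ ba`. -/
theorem negQPlane_ab_sub_ba {K : Type*} [Field K] [CharZero K]
    (n k m i j : ℕ) (hn : Odd n) (hk : Odd k) (hm : Odd m)
    (hcop : Nat.Coprime n k) (hmk : n < m * k)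
    (hi : 2 * i = m * k + n) (hj : 2 * j = m * k - n)
    (a b : NegQPlane K)
    (ha : a = NegQPlane.u K ^ i * NegQPlane.v K ^ j - NegQPlane.u K ^ j * NegQPlane.v K ^ i)
    (hb : b = NegQPlane.u K ^ (3 * i) * NegQPlane.v K ^ (3 * j) -
      NegQPlane.u K ^ (3 * j) * NegQPlane.v K ^ (3 * i)) :
    (a * b - b * a =
        (2 : ℤ) • (NegQPlane.u K ^ (i + 3 * j) * NegQPlane.v K ^ (3 * i + j) -
          NegQPlane.u K ^ (3 * i + j) * NegQPlane.v K ^ (i + 3 * j)) ∨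
      a * b - b * a =
        -((2 : ℤ) • (NegQPlane.u K ^ (i + 3 * j) * NegQPlane.v K ^ (3 * i + j) -
          NegQPlane.u K ^ (3 * i + j) * NegQPlane.v K ^ (i + 3 * j)))) ∧
    a * b - b * a ≠ 0 ∧ a * b ≠ b * a := by

  obtain ⟨tn, htn⟩ := hn
  have hij : i + j = m * k := by omega
  have hji : j < i := by omega
  have hqne : (3 * i + j) ≠ (i + 3 * j) := by omega
  have hij_odd : Odd (i + j) := hij ▸ (hm.mul hk)
  obtain ⟨c, hc⟩ := hij_odd
  have hp1 : Odd (i + 3 * j) := ⟨j + c, by omega⟩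
  have hq1 : Odd (3 * i + j) := ⟨i + c, by omega⟩
  have hvu : NegQPlane.v K * NegQPlane.u K = -(NegQPlane.u K * NegQPlane.v K) := by
    have h := RingQuot.mkAlgHom_rel K (NegQRel.rel (K := K))
    simpa [NegQPlane.u, NegQPlane.v] using h
  have hmain : a * b - b * a =
      (2 : ℤ) • (NegQPlane.u K ^ (i + 3 * j) * NegQPlane.v K ^ (3 * i + j) -
        NegQPlane.u K ^ (3 * i + j) * NegQPlane.v K ^ (i + 3 * j)) ∨
      a * b - b * a =
      -((2 : ℤ) • (NegQPlane.u K ^ (i + 3 * j) * NegQPlane.v K ^ (3 * i + j) -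
        NegQPlane.u K ^ (3 * i + j) * NegQPlane.v K ^ (i + 3 * j))) := by
    subst ha hb
    rcases Nat.even_or_odd i with hie | hio
    · obtain ⟨e, he⟩ := hie
      have hjo : Odd j := ⟨c - e, by omega⟩
      exact Or.inl (NegQGeneric2.case2 (NegQPlane.u K) (NegQPlane.v K) hvu i j ⟨e, he⟩ hjo)
    · obtain ⟨e, he⟩ := hio
      have hje : Even j := ⟨c - e, by omega⟩
      exact Or.inr (NegQGeneric.case1 (NegQPlane.u K) (NegQPlane.v K) hvu i j ⟨e, he⟩ hje)
  have hT : (2 : ℤ) • (NegQPlane.u K ^ (i + 3 * j) * NegQPlane.v K ^ (3 * i + j) -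
      NegQPlane.u K ^ (3 * i + j) * NegQPlane.v K ^ (i + 3 * j)) ≠ 0 :=
    NegQAux.two_smul_ne K hp1 hq1 hq1 hp1 hqne
  have hne : a * b - b * a ≠ 0 := by
    rcases hmain with h | h
    · rw [h]; exact hT
    · rw [h]; exact fun h0 => hT (neg_eq_zero.mp h0)
  exact ⟨hmain, hne, fun hcomm => hne (by rw [hcomm]; exact sub_self _)⟩
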